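/- Fix T > 0, σ ∈ ℝ, R ∈ (0,1], and let α(t) = λ e^{-ρ t} + (1-λ) e^{-γ t} with γ > ρ > 0 and λ ∈ (0,1). Let P : Δ[0,T] → ℝ be the continuous, s-differentiable solution of the equilibrium Riccati equation ∂_s P(t,s) + (σ² - 2((1-R)/R) P(s,s)) P(t,s) + α(s-t) ((1-R)/R) P(s,s)² = 0, P(t,T) = α(T-t), on Δ[0,T] = {(t,s) : 0 ≤ t ≤ s ≤ T}. Then there exists a constant K > 0 such that for every t ∈ [0,T), every ε ∈ (0, T-t], and every differentiable function Pᵗ : [t, t+ε] → ℝ satisfying the Riccati equation (Pᵗ)'(s) + σ² Pᵗ(s) - ((1-R)/(α(s-t) R)) Pᵗ(s)² = 0 on [t, t+ε] with terminal condition Pᵗ(t+ε) = P(t, t+ε), one has |Pᵗ(s) - P(t,s)| ≤ K ε and |Pᵗ(s) - P(s,s)| ≤ K ε for all s ∈ [t, t+ε], and |Pᵗ(t) - P(t,t)| ≤ K ε². -/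

import Mathlib

/-!
Write `c = (1-R)/R`. Both `P(t,·)` and `Pᵗ` solve backward equations whose right-hand side is
at most a multiple of the solution while the solution is nonnegative, so positive terminal data
keep them positive; together with compactness and a comparison with `exp (σ² s)` this gives
uniform bounds. The equations for `P(t,·)` and `P(t',·)` differ only through
`α(s-t) - α(s-t') = O(t'-t)`, so backward Grönwall makes `P` Lipschitz in its first variable.
Finally `D = Pᵗ - P(t,·)` vanishes at `t+ε` and satisfies
`D' = (2c P(s,s) - σ²) D + (c / α(s-t)) (Pᵗ - α(s-t) P(s,s))²`, where
`P(t,s) - α(s-t) P(s,s) = O(s-t)` because `α(0) = 1`; the forcing is therefore `O(ε)`, and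
Grönwall over an interval of length `ε` yields `|D| = O(ε²)`.
-/

open Real Set

/-- `P` (with `s`-partial derivative `Ps`) is a continuous solution, on
`Δ[0,T] = {(t,s) : 0 ≤ t ≤ s ≤ T}`, of the equilibrium Riccati equation
`∂ₛP(t,s) + (σ² - 2((1-R)/R) P(s,s)) P(t,s) + α(s-t) ((1-R)/R) P(s,s)² = 0`
with terminal condition `P(t,T) = α(T-t)`. -/
def IsERESolution (T σ R : ℝ) (α : ℝ → ℝ) (P Ps : ℝ → ℝ → ℝ) : Prop :=
  ContinuousOn (fun p : ℝ × ℝ => P p.1 p.2)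
    {p : ℝ × ℝ | 0 ≤ p.1 ∧ p.1 ≤ p.2 ∧ p.2 ≤ T} ∧
  (∀ t ∈ Set.Icc (0 : ℝ) T, ∀ s ∈ Set.Icc t T,
    HasDerivWithinAt (P t) (Ps t s) (Set.Icc t T) s ∧
    Ps t s + (σ ^ 2 - 2 * ((1 - R) / R) * P s s) * P t s
      + α (s - t) * (((1 - R) / R) * (P s s) ^ 2) = 0) ∧
  (∀ t ∈ Set.Icc (0 : ℝ) T, P t T = α (T - t))

theorem antitoneOn_mul_exp_of_deriv_le {f f' : ℝ → ℝ} {a b K : ℝ}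
    (hf : ∀ x ∈ Icc a b, HasDerivWithinAt f (f' x) (Icc a b) x)
    (hle : ∀ x ∈ Ioo a b, f' x ≤ K * f x) :
    AntitoneOn (fun x => f x * exp (-K * x)) (Icc a b) := by
  have hexp (x : ℝ) : HasDerivAt (fun x => exp (-K * x)) (exp (-K * x) * -K) x := by
    simpa using ((hasDerivAt_id x).const_mul (-K)).exp
  refine antitoneOn_of_hasDerivWithinAt_nonpos (convex_Icc a b)
    (f' := fun x => (f' x - K * f x) * exp (-K * x))
    (fun x hx => (hf x hx).continuousWithinAt.mul (hexp x).continuousAt.continuousWithinAt)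
    (fun x hx => ?_) (fun x hx => ?_) <;> rw [interior_Icc] at *
  · exact (((hf x (Ioo_subset_Icc_self hx)).mono Ioo_subset_Icc_self).mul
      (hexp x).hasDerivWithinAt).congr_deriv (by ring)
  · exact mul_nonpos_of_nonpos_of_nonneg (by linarith [hle x hx]) (exp_pos _).le

theorem pos_of_deriv_le_mul_of_pos_right {f f' : ℝ → ℝ} {a b K : ℝ}
    (hf : ∀ x ∈ Icc a b, HasDerivWithinAt f (f' x) (Icc a b) x)
    (hle : ∀ x ∈ Icc a b, 0 ≤ f x → f' x ≤ K * f x) (hb : 0 < f b) :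
    ∀ x ∈ Icc a b, 0 < f x := by
  by_contra! ⟨x, hx, hfx⟩
  have hZ : IsCompact (Icc a b ∩ f ⁻¹' Iic 0) :=
    isCompact_Icc.of_isClosed_subset (ContinuousOn.preimage_isClosed_of_isClosed
      (fun y hy => (hf y hy).continuousWithinAt) isClosed_Icc isClosed_Iic) inter_subset_left
  obtain ⟨z, ⟨hz, hfz⟩, hzmax⟩ := hZ.exists_isGreatest ⟨x, hx, hfx⟩
  have hzb : z < b := hz.2.lt_of_ne (by rintro rfl; exact hfz.not_gt hb)
  -- `f ≥ 0` on `(z, b]`, so `f x * exp (-K x)` decreases there from `f z ≤ 0` to `f b > 0`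
  have hpos : ∀ y ∈ Ioo z b, 0 ≤ f y := fun y hy => le_of_not_ge fun hfy =>
    hy.1.not_ge (hzmax ⟨⟨hz.1.trans hy.1.le, hy.2.le⟩, hfy⟩)
  have hsub : Icc z b ⊆ Icc a b := Icc_subset_Icc hz.1 le_rfl
  have : f b * exp (-K * b) ≤ f z * exp (-K * z) :=
    antitoneOn_mul_exp_of_deriv_le (fun y hy => (hf y (hsub hy)).mono hsub)
      (fun y hy => hle y (hsub (Ioo_subset_Icc_self hy)) (hpos y hy))
      (left_mem_Icc.2 hzb.le) (right_mem_Icc.2 hzb.le) hzb.le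
  linarith [mul_pos hb (exp_pos (-K * b)),
    mul_nonpos_of_nonpos_of_nonneg (show f z ≤ 0 from hfz) (exp_pos (-K * z)).le]

theorem gronwallBound_le_mul_exp {δ K ε x : ℝ} (hK : 0 ≤ K) (hε : 0 ≤ ε) :
    gronwallBound δ K ε x ≤ (δ + ε * x) * exp (K * x) := by
  rcases hK.eq_or_lt with rfl | hK
  · simp [gronwallBound_K0]
  rw [gronwallBound_of_K_ne_0 hK.ne']
  -- `exp (K x) - 1 ≤ K x exp (K x)` is `1 - exp (-K x) ≤ K x`
  have h : exp (K * x) - 1 ≤ K * x * exp (K * x) := by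
    nlinarith [add_one_le_exp (-(K * x)), exp_neg (K * x), exp_pos (K * x),
      mul_inv_cancel₀ (exp_pos (K * x)).ne']
  have : ε / K * (exp (K * x) - 1) ≤ ε * x * exp (K * x) := by
    rw [div_mul_eq_mul_div, div_le_iff₀ hK]; nlinarith
  linarith

theorem abs_le_of_abs_deriv_le_backward {f f' : ℝ → ℝ} {a b δ K ε : ℝ} (hK : 0 ≤ K)
    (hε : 0 ≤ ε) (hf : ∀ x ∈ Icc a b, HasDerivWithinAt f (f' x) (Icc a b) x)
    (hb : |f b| ≤ δ) (bound : ∀ x ∈ Icc a b, |f' x| ≤ K * |f x| + ε) :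
    ∀ x ∈ Icc a b, |f x| ≤ (δ + ε * (b - x)) * exp (K * (b - x)) := by
  have hmap : MapsTo (fun u => a + b - u) (Icc a b) (Icc a b) :=
    fun u hu => ⟨by linarith [hu.2], by linarith [hu.1]⟩
  -- Grönwall's inequality forward in time for the reflection `u ↦ f (a + b - u)`
  have hg : ∀ u ∈ Icc a b,
      HasDerivWithinAt (fun u => f (a + b - u)) (-f' (a + b - u)) (Icc a b) u := fun u hu => by
    simpa [Function.comp_def] using
      (hf _ (hmap hu)).scomp u ((hasDerivAt_id u).const_sub (a + b)).hasDerivWithinAt hmap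
  have key := norm_le_gronwallBound_of_norm_deriv_right_le
    (fun u hu => (hg u hu).continuousWithinAt)
    (fun u hu => (hg u (Ico_subset_Icc_self hu)).mono_of_mem_nhdsWithin (Icc_mem_nhdsGE_of_mem hu))
    (by simpa using hb) (fun u hu => by simpa using bound _ (hmap (Ico_subset_Icc_self hu)))
  intro x hx
  calc |f x| ≤ gronwallBound δ K ε (b - x) := by
        simpa [show a + b - x - a = b - x by ring] using key _ (hmap hx)
    _ ≤ _ := gronwallBound_le_mul_exp hK hε

section Riccati

variable {f f' q : ℝ → ℝ} {a b σ : ℝ}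

theorem le_mul_exp_of_riccati_backward
    (hf : ∀ x ∈ Icc a b, HasDerivWithinAt f (f' x) (Icc a b) x)
    (hode : ∀ x ∈ Icc a b, f' x + σ ^ 2 * f x - q x * f x ^ 2 = 0)
    (hq : ∀ x ∈ Icc a b, 0 ≤ q x) :
    ∀ x ∈ Icc a b, f x ≤ f b * exp (σ ^ 2 * (b - x)) := by
  intro x hx
  have hb : b ∈ Icc a b := right_mem_Icc.2 (hx.1.trans hx.2)
  have hanti := antitoneOn_mul_exp_of_deriv_le (f := fun x => -f x) (K := -σ ^ 2)
    (fun y hy => (hf y hy).neg) (fun y hy => by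
      have := hode y (Ioo_subset_Icc_self hy)
      nlinarith [mul_nonneg (hq y (Ioo_subset_Icc_self hy)) (sq_nonneg (f y))]) hx hb hx.2
  simp only [neg_neg, neg_mul] at hanti
  calc f x = f x * exp (σ ^ 2 * x) * exp (-(σ ^ 2 * x)) := by
        rw [mul_assoc, ← exp_add]; simp
    _ ≤ f b * exp (σ ^ 2 * b) * exp (-(σ ^ 2 * x)) :=
        mul_le_mul_of_nonneg_right (by linarith) (exp_pos _).le
    _ = f b * exp (σ ^ 2 * (b - x)) := by rw [mul_assoc, ← exp_add]; ring_nf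

theorem pos_of_riccati_backward {Q : ℝ}
    (hf : ∀ x ∈ Icc a b, HasDerivWithinAt f (f' x) (Icc a b) x)
    (hode : ∀ x ∈ Icc a b, f' x + σ ^ 2 * f x - q x * f x ^ 2 = 0)
    (hq : ∀ x ∈ Icc a b, 0 ≤ q x) (hqQ : ∀ x ∈ Icc a b, q x ≤ Q) (hb : 0 < f b) :
    ∀ x ∈ Icc a b, 0 < f x := by
  obtain ⟨N, hN⟩ := isCompact_Icc.exists_bound_of_continuousOn
    fun x hx => (hf x hx).continuousWithinAt
  -- while `f ≥ 0`, the quadratic term is at most `Q N f`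
  refine pos_of_deriv_le_mul_of_pos_right (K := Q * N) hf (fun x hx hfx => ?_) hb
  have hfN : f x ≤ N := (le_abs_self _).trans (by simpa using hN x hx)
  have := hode x hx
  nlinarith [mul_le_mul (hqQ x hx) hfN hfx ((hq x hx).trans (hqQ x hx)),
    mul_nonneg (sq_nonneg σ) hfx, mul_nonneg (mul_nonneg (hq x hx) hfx) hfx]

theorem mem_Ioc_of_riccati_backward {Q M T : ℝ}
    (hf : ∀ x ∈ Icc a b, HasDerivWithinAt f (f' x) (Icc a b) x)
    (hode : ∀ x ∈ Icc a b, f' x + σ ^ 2 * f x - q x * f x ^ 2 = 0)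
    (hq : ∀ x ∈ Icc a b, 0 ≤ q x) (hqQ : ∀ x ∈ Icc a b, q x ≤ Q) (hb : f b ∈ Ioc 0 M)
    (hT : b - a ≤ T) : ∀ x ∈ Icc a b, f x ∈ Ioc 0 (M * exp (σ ^ 2 * T)) := fun x hx =>
  ⟨pos_of_riccati_backward hf hode hq hqQ hb.1 x hx,
    (le_mul_exp_of_riccati_backward hf hode hq x hx).trans <|
      mul_le_mul hb.2 (exp_le_exp.2 (by nlinarith [hx.1, sq_nonneg σ])) (exp_pos _).le
        (hb.1.le.trans hb.2)⟩

end Riccati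

noncomputable def quasiHyperbolicDiscount (l ρ γ t : ℝ) : ℝ :=
  l * exp (-ρ * t) + (1 - l) * exp (-γ * t)

namespace quasiHyperbolicDiscount

variable {l ρ γ : ℝ}

theorem map_zero : quasiHyperbolicDiscount l ρ γ 0 = 1 := by
  simp [quasiHyperbolicDiscount]

theorem pos (hl0 : 0 ≤ l) (hl1 : l ≤ 1) (t : ℝ) : 0 < quasiHyperbolicDiscount l ρ γ t := by
  unfold quasiHyperbolicDiscount
  rcases hl0.eq_or_lt with rfl | hl0
  · simp [exp_pos]
  · have := exp_pos (-γ * t)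
    positivity

theorem hasDerivAt (t : ℝ) : HasDerivAt (quasiHyperbolicDiscount l ρ γ)
    (-(l * ρ * exp (-ρ * t) + (1 - l) * γ * exp (-γ * t))) t := by
  have hexp (κ : ℝ) : HasDerivAt (fun t => exp (-κ * t)) (exp (-κ * t) * -κ) t := by
    simpa using ((hasDerivAt_id t).const_mul (-κ)).exp
  exact (((hexp ρ).const_mul l).add ((hexp γ).const_mul (1 - l))).congr_deriv (by ring)

theorem antitone (hl0 : 0 ≤ l) (hl1 : l ≤ 1) (hρ : 0 ≤ ρ) (hγ : 0 ≤ γ) :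
    Antitone (quasiHyperbolicDiscount l ρ γ) :=
  antitone_of_hasDerivAt_nonpos hasDerivAt fun t => by
    have := sub_nonneg.2 hl1
    simp only [Pi.zero_apply, neg_nonpos]
    positivity

theorem le_one (hl0 : 0 ≤ l) (hl1 : l ≤ 1) (hρ : 0 ≤ ρ) (hγ : 0 ≤ γ) {t : ℝ}
    (ht : 0 ≤ t) :
    quasiHyperbolicDiscount l ρ γ t ≤ 1 := by
  simpa [map_zero] using antitone hl0 hl1 hρ hγ ht

theorem abs_sub_le (hl0 : 0 ≤ l) (hl1 : l ≤ 1) (hρ : 0 ≤ ρ) (hργ : ρ ≤ γ) {u v : ℝ}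
    (hu : 0 ≤ u) (hv : 0 ≤ v) :
    |quasiHyperbolicDiscount l ρ γ u - quasiHyperbolicDiscount l ρ γ v| ≤ γ * |u - v| := by
  refine Convex.norm_image_sub_le_of_norm_hasDerivWithin_le
    (fun t _ => (hasDerivAt t).hasDerivWithinAt) (fun t (ht : 0 ≤ t) => ?_) (convex_Ici 0) hv hu
  have h1 : exp (-ρ * t) ≤ 1 := exp_le_one_iff.2 (by nlinarith)
  have h2 : exp (-γ * t) ≤ 1 := exp_le_one_iff.2 (by nlinarith)
  have hl : 0 ≤ 1 - l := sub_nonneg.2 hl1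
  have hγ : 0 ≤ γ := hρ.trans hργ
  rw [norm_neg, Real.norm_of_nonneg (by positivity)]
  nlinarith [mul_le_mul_of_nonneg_left h1 (mul_nonneg hl0 hρ),
    mul_le_mul_of_nonneg_left h2 (mul_nonneg hl hγ), mul_nonneg hl0 (sub_nonneg.2 hργ)]

end quasiHyperbolicDiscount

theorem abs_sq_sub_two_mul_le {σ c p M : ℝ} (hc : 0 ≤ c) (hp : |p| ≤ M) :
    |σ ^ 2 - 2 * c * p| ≤ σ ^ 2 + 2 * c * M :=
  calc |σ ^ 2 - 2 * c * p| ≤ |σ ^ 2| + |2 * c * p| := abs_sub _ _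
    _ = σ ^ 2 + 2 * c * |p| := by
      rw [abs_mul, abs_of_nonneg (sq_nonneg σ), abs_of_nonneg (by positivity : 0 ≤ 2 * c)]
    _ ≤ σ ^ 2 + 2 * c * M := by gcongr

theorem abs_riccati_sub_le {σ c w a₀ f g p M B : ℝ} (hc : 0 ≤ c) (ha₀ : 0 < a₀)
    (hw : a₀ ≤ w) (hw1 : w ≤ 1) (hp : |p| ≤ M) (hf : 0 < f) (hfB : f ≤ B)
    (hMB : M ≤ B) :
    |(-σ ^ 2 * f + c / w * f ^ 2) - (-(σ ^ 2 - 2 * c * p) * g - w * (c * p ^ 2))| ≤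
      (σ ^ 2 + 2 * c * M + 2 * B * c / a₀) * |f - g| + 2 * B * c / a₀ * |g - w * p| := by
  have hw0 : 0 < w := ha₀.trans_le hw
  have e : (-σ ^ 2 * f + c / w * f ^ 2) - (-(σ ^ 2 - 2 * c * p) * g - w * (c * p ^ 2))
      = -((σ ^ 2 - 2 * c * p) * (f - g)) + c / w * (f - w * p) ^ 2 := by
    field_simp; ring
  have hfwp : |f - w * p| ≤ 2 * B := by
    have : |w * p| ≤ M := by
      rw [abs_mul, abs_of_pos hw0]; nlinarith [abs_nonneg p]
    linarith [abs_sub (f) (w * p), abs_of_pos hf]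
  have hsq : c / w * (f - w * p) ^ 2 ≤ c / a₀ * (2 * B * (|f - g| + |g - w * p|)) := by
    rw [← sq_abs, sq]
    exact mul_le_mul (div_le_div_of_nonneg_left hc ha₀ hw)
      (mul_le_mul hfwp (abs_sub_le f g (w * p)) (abs_nonneg _)
        (by linarith [abs_nonneg (f - w * p)]))
      (by positivity) (div_nonneg hc ha₀.le)
  rw [e]
  calc _ ≤ |(σ ^ 2 - 2 * c * p) * (f - g)| + c / w * (f - w * p) ^ 2 := by
        refine (abs_add_le _ _).trans ?_
        rw [abs_neg, abs_of_nonneg (by positivity : 0 ≤ c / w * (f - w * p) ^ 2)]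
    _ ≤ (σ ^ 2 + 2 * c * M) * |f - g| + c / a₀ * (2 * B * (|f - g| + |g - w * p|)) := by
        rw [abs_mul]
        exact add_le_add
          (mul_le_mul_of_nonneg_right (abs_sq_sub_two_mul_le hc hp) (abs_nonneg _)) hsq
    _ = _ := by ring

namespace IsERESolution

variable {T σ R : ℝ} {α : ℝ → ℝ} {P Ps : ℝ → ℝ → ℝ}

theorem exists_bound (hP : IsERESolution T σ R α P Ps) :
    ∃ M, 0 < M ∧ ∀ t s, 0 ≤ t → t ≤ s → s ≤ T → |P t s| ≤ M := by
  have hΔ : IsCompact {p : ℝ × ℝ | 0 ≤ p.1 ∧ p.1 ≤ p.2 ∧ p.2 ≤ T} :=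
    (isCompact_Icc.prod isCompact_Icc).of_isClosed_subset
      ((isClosed_le continuous_const continuous_fst).inter
        ((isClosed_le continuous_fst continuous_snd).inter
          (isClosed_le continuous_snd continuous_const)))
      (s := Icc 0 T ×ˢ Icc 0 T)
      fun p ⟨h1, h2, h3⟩ => ⟨⟨h1, h2.trans h3⟩, ⟨h1.trans h2, h3⟩⟩
  obtain ⟨M, hM⟩ := hΔ.exists_bound_of_continuousOn hP.1
  refine ⟨max M 1, by positivity, fun t s h1 h2 h3 => le_max_of_le_left ?_⟩
  simpa using hM (t, s) ⟨h1, h2, h3⟩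

theorem hasDerivWithinAt (hP : IsERESolution T σ R α P Ps) {t s : ℝ} (ht : t ∈ Icc 0 T)
    (hs : s ∈ Icc t T) : HasDerivWithinAt (P t) (Ps t s) (Icc t T) s :=
  (hP.2.1 t ht s hs).1

theorem deriv_eq (hP : IsERESolution T σ R α P Ps) {t s : ℝ} (ht : t ∈ Icc 0 T)
    (hs : s ∈ Icc t T) :
    Ps t s = -(σ ^ 2 - 2 * ((1 - R) / R) * P s s) * P t s
      - α (s - t) * ((1 - R) / R * P s s ^ 2) := by
  linarith [(hP.2.1 t ht s hs).2]

theorem pos (hP : IsERESolution T σ R α P Ps) (hR : 0 ≤ (1 - R) / R)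
    (hα : ∀ u ∈ Icc 0 T, 0 < α u) : ∀ t ∈ Icc 0 T, ∀ s ∈ Icc t T, 0 < P t s := by
  obtain ⟨M, -, hM⟩ := hP.exists_bound
  intro t ht
  have hT : T ∈ Icc t T := right_mem_Icc.2 ht.2
  refine pos_of_deriv_le_mul_of_pos_right (K := σ ^ 2 + 2 * ((1 - R) / R) * M)
    (fun x hx => hP.hasDerivWithinAt ht hx) (fun x hx hPx => ?_)
    (by rw [hP.2.2 t ht]; exact hα _ ⟨by linarith [ht.2], by linarith [ht.1]⟩)
  have hxx : P x x ≤ M := le_of_abs_le (hM x x (ht.1.trans hx.1) le_rfl hx.2)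
  have hαx : 0 ≤ α (x - t) := (hα _ ⟨by linarith [hx.1], by linarith [hx.2, ht.1]⟩).le
  rw [hP.deriv_eq ht hx]
  nlinarith [mul_nonneg hαx (mul_nonneg hR (sq_nonneg (P x x))), mul_nonneg (sq_nonneg σ) hPx,
    mul_nonneg (mul_nonneg hR (sub_nonneg.2 hxx)) hPx]

theorem abs_deriv_sub_deriv_le (hP : IsERESolution T σ R α P Ps) (hR : 0 ≤ (1 - R) / R)
    {M : ℝ} (hM : ∀ t s, 0 ≤ t → t ≤ s → s ≤ T → |P t s| ≤ M) {t t' x : ℝ}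
    (ht : t ∈ Icc 0 T) (htt' : t ≤ t') (hx : x ∈ Icc t' T) :
    |Ps t x - Ps t' x| ≤ (σ ^ 2 + 2 * ((1 - R) / R) * M) * |P t x - P t' x|
      + |α (x - t) - α (x - t')| * ((1 - R) / R * M ^ 2) := by
  rw [hP.deriv_eq ht ⟨htt'.trans hx.1, hx.2⟩,
    hP.deriv_eq ⟨ht.1.trans htt', hx.1.trans hx.2⟩ hx]
  set c := (1 - R) / R
  have hxx : |P x x| ≤ M := hM x x (ht.1.trans (htt'.trans hx.1)) le_rfl hx.2
  have hsq : |c * P x x ^ 2| ≤ c * M ^ 2 := by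
    rw [abs_of_nonneg (by positivity)]
    exact mul_le_mul_of_nonneg_left (by simpa using pow_le_pow_left₀ (abs_nonneg _) hxx 2) hR
  calc _ = |-((σ ^ 2 - 2 * c * P x x) * (P t x - P t' x))
          - (α (x - t) - α (x - t')) * (c * P x x ^ 2)| := by ring_nf
    _ ≤ |σ ^ 2 - 2 * c * P x x| * |P t x - P t' x|
          + |α (x - t) - α (x - t')| * |c * P x x ^ 2| := by
        rw [← abs_mul, ← abs_mul, ← abs_neg ((σ ^ 2 - 2 * c * P x x) * _)]
        exact abs_sub _ _
    _ ≤ _ := by gcongr; exact abs_sq_sub_two_mul_le hR hxx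

theorem exists_lipschitz_fst (hP : IsERESolution T σ R α P Ps) (hT : 0 ≤ T)
    (hR : 0 ≤ (1 - R) / R) {L : ℝ} (hL : 0 ≤ L)
    (hαL : ∀ u ∈ Icc 0 T, ∀ v ∈ Icc 0 T, |α u - α v| ≤ L * |u - v|) :
    ∃ L', 0 ≤ L' ∧ ∀ t t' s, 0 ≤ t → t ≤ t' → t' ≤ s → s ≤ T →
      |P t s - P t' s| ≤ L' * (t' - t) := by
  obtain ⟨M, hM0, hM⟩ := hP.exists_bound
  set c := (1 - R) / R
  set K := σ ^ 2 + 2 * c * M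
  refine ⟨L * (1 + c * M ^ 2 * T) * exp (K * T), by positivity,
    fun t t' s ht htt' ht's hsT => ?_⟩
  have ht : t ∈ Icc 0 T := ⟨ht, by linarith⟩
  have ht' : t' ∈ Icc 0 T := ⟨by linarith, by linarith⟩
  have hαsub : ∀ x ∈ Icc t' T, |α (x - t) - α (x - t')| ≤ L * (t' - t) := fun x hx => by
    have := hαL (x - t) ⟨by linarith [hx.1], by linarith [hx.2]⟩
      (x - t') ⟨by linarith [hx.1], by linarith [hx.2]⟩
    rwa [sub_sub_sub_cancel_left, abs_of_nonneg (sub_nonneg.2 htt')] at this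
  have hbound : ∀ x ∈ Icc t' T,
      |Ps t x - Ps t' x| ≤ K * |P t x - P t' x| + L * (t' - t) * (c * M ^ 2) := fun x hx =>
    (hP.abs_deriv_sub_deriv_le hR hM ht htt' hx).trans (by gcongr; exact hαsub x hx)
  have hterm : |P t T - P t' T| ≤ L * (t' - t) := by
    rw [hP.2.2 t ht, hP.2.2 t' ht']
    simpa using hαsub T ⟨ht's.trans hsT, le_rfl⟩
  have := abs_le_of_abs_deriv_le_backward (by positivity) (by positivity)
    (f := fun x => P t x - P t' x)
    (fun x hx => ((hP.hasDerivWithinAt ht ⟨by linarith [hx.1], hx.2⟩).mono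
      (Icc_subset_Icc htt' le_rfl)).sub (hP.hasDerivWithinAt ht' hx)) hterm hbound s ⟨ht's, hsT⟩
  calc |P t s - P t' s| ≤ L * (t' - t) * (1 + c * M ^ 2 * (T - s)) * exp (K * (T - s)) := by
        convert this using 1; ring
    _ ≤ L * (t' - t) * (1 + c * M ^ 2 * T) * exp (K * T) := by
        have : 0 ≤ s := by linarith
        gcongr <;> linarith
    _ = _ := by ring

theorem exists_abs_sub_mul_diag_le (hP : IsERESolution T σ R α P Ps) (hT : 0 ≤ T)
    (hR : 0 ≤ (1 - R) / R) {L : ℝ} (hL : 0 ≤ L)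
    (hαL : ∀ u ∈ Icc 0 T, ∀ v ∈ Icc 0 T, |α u - α v| ≤ L * |u - v|) (hα0 : α 0 = 1) :
    ∃ C, 0 ≤ C ∧ ∀ t x, 0 ≤ t → t ≤ x → x ≤ T →
      |P t x - α (x - t) * P x x| ≤ C * (x - t) := by
  obtain ⟨M, hM0, hM⟩ := hP.exists_bound
  obtain ⟨L', hL', hlip⟩ := hP.exists_lipschitz_fst hT hR hL hαL
  refine ⟨L' + L * M, by positivity, fun t x ht htx hxT => ?_⟩
  have hα : |α 0 - α (x - t)| ≤ L * (x - t) := by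
    have := hαL 0 ⟨le_rfl, hT⟩ (x - t) ⟨by linarith, by linarith⟩
    rwa [zero_sub, abs_neg, abs_of_nonneg (sub_nonneg.2 htx)] at this
  calc |P t x - α (x - t) * P x x|
      = |(P t x - P x x) + (α 0 - α (x - t)) * P x x| := by rw [hα0]; ring_nf
    _ ≤ |P t x - P x x| + |α 0 - α (x - t)| * |P x x| := by
        rw [← abs_mul]; exact abs_add_le _ _
    _ ≤ L' * (x - t) + L * (x - t) * M := by
        gcongr
        exacts [hlip t x x ht htx le_rfl hxT, hM x x (ht.trans htx) le_rfl hxT]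
    _ = (L' + L * M) * (x - t) := by ring

theorem exists_local_riccati_estimate (hP : IsERESolution T σ R α P Ps) (hT : 0 ≤ T)
    (hR : 0 ≤ (1 - R) / R) {a₀ L : ℝ} (ha₀ : 0 < a₀)
    (hα : ∀ u ∈ Icc 0 T, a₀ ≤ α u ∧ α u ≤ 1) (hα0 : α 0 = 1) (hL : 0 ≤ L)
    (hαL : ∀ u ∈ Icc 0 T, ∀ v ∈ Icc 0 T, |α u - α v| ≤ L * |u - v|) :
    ∃ C, 0 ≤ C ∧ ∀ t ∈ Ico 0 T, ∀ ε ∈ Ioc 0 (T - t), ∀ Pt Pt' : ℝ → ℝ,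
      (∀ s ∈ Icc t (t + ε), HasDerivWithinAt Pt (Pt' s) (Icc t (t + ε)) s ∧
        Pt' s + σ ^ 2 * Pt s - ((1 - R) / (α (s - t) * R)) * Pt s ^ 2 = 0) →
      Pt (t + ε) = P t (t + ε) → ∀ s ∈ Icc t (t + ε), |Pt s - P t s| ≤ C * ε ^ 2 := by
  obtain ⟨M, hM0, hM⟩ := hP.exists_bound
  obtain ⟨C₁, hC₁, hres⟩ := hP.exists_abs_sub_mul_diag_le hT hR hL hαL hα0
  set c := (1 - R) / R
  set B := M * exp (σ ^ 2 * T)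
  set K := σ ^ 2 + 2 * c * M + 2 * B * c / a₀
  set E := 2 * B * c / a₀ * C₁
  refine ⟨E * exp (K * T), by positivity, ?_⟩
  rintro t ⟨ht0, htT⟩ ε ⟨hε0, hεT⟩ Pt Pt' hPt hterm
  have ht : t ∈ Icc 0 T := ⟨ht0, htT.le⟩
  have hsub : Icc t (t + ε) ⊆ Icc t T := Icc_subset_Icc le_rfl (by linarith)
  have hαI : ∀ s ∈ Icc t (t + ε), a₀ ≤ α (s - t) ∧ α (s - t) ≤ 1 := fun s hs =>
    hα _ ⟨by linarith [hs.1], by linarith [hs.2]⟩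
  have hode : ∀ s ∈ Icc t (t + ε), Pt' s + σ ^ 2 * Pt s - c / α (s - t) * Pt s ^ 2 = 0 :=
    fun s hs => by rw [div_div, mul_comm R]; exact (hPt s hs).2
  have hq : ∀ s ∈ Icc t (t + ε), 0 ≤ c / α (s - t) := fun s hs =>
    div_nonneg hR (ha₀.trans_le (hαI s hs).1).le
  have hPtB : ∀ s ∈ Icc t (t + ε), Pt s ∈ Ioc 0 B :=
    mem_Ioc_of_riccati_backward (fun s hs => (hPt s hs).1) hode hq
      (fun s hs => div_le_div_of_nonneg_left hR ha₀ (hαI s hs).1) (by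
        rw [hterm]
        exact ⟨hP.pos hR (fun u hu => ha₀.trans_le (hα u hu).1) t ht _
          ⟨by linarith, by linarith⟩,
          le_of_abs_le (hM t _ ht0 (by linarith) (by linarith))⟩) (by linarith)
  have hbound : ∀ x ∈ Icc t (t + ε), |Pt' x - Ps t x| ≤ K * |Pt x - P t x| + E * ε := by
    intro x hx
    have hMB : M ≤ B := le_mul_of_one_le_right hM0.le (one_le_exp (by positivity))
    rw [hP.deriv_eq ht (hsub hx),
      show Pt' x = -σ ^ 2 * Pt x + c / α (x - t) * Pt x ^ 2 by linarith [hode x hx]]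
    refine (abs_riccati_sub_le hR ha₀ (hαI x hx).1 (hαI x hx).2
      (hM x x (ht0.trans hx.1) le_rfl (hsub hx).2) (hPtB x hx).1 (hPtB x hx).2 hMB).trans ?_
    have := (hres t x ht0 hx.1 (hsub hx).2).trans
      (mul_le_mul_of_nonneg_left (show x - t ≤ ε by linarith [hx.2]) hC₁)
    calc _ ≤ K * |Pt x - P t x| + 2 * B * c / a₀ * (C₁ * ε) := by gcongr
      _ = K * |Pt x - P t x| + E * ε := by simp only [E]; ring
  intro s hs
  have := abs_le_of_abs_deriv_le_backward (by positivity) (by positivity)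
    (fun x hx => (hPt x hx).1.sub ((hP.hasDerivWithinAt ht (hsub hx)).mono hsub))
    (by simp [hterm] : |Pt (t + ε) - P t (t + ε)| ≤ 0) hbound s hs
  calc |Pt s - P t s| ≤ (0 + E * ε * (t + ε - s)) * exp (K * (t + ε - s)) := this
    _ ≤ E * ε * ε * exp (K * T) := by
        rw [zero_add]
        gcongr <;> linarith [hs.1]
    _ = _ := by ring

end IsERESolution

/-- comparison estimates between the solution `P` of the
equilibrium Riccati equation and the local (constant-discount) Riccati solution
`Pᵗ` on a short interval `[t, t+ε]` with terminal value `Pᵗ(t+ε) = P(t,t+ε)`: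
`|Pᵗ(s) - P(t,s)| ≤ Kε`, `|Pᵗ(s) - P(s,s)| ≤ Kε` on `[t,t+ε]`, and
`|Pᵗ(t) - P(t,t)| ≤ Kε²`. -/
theorem ere_spike_variation_estimates
    (T σ R ρ γ l : ℝ) (hT : 0 < T) (hR0 : 0 < R) (hR1 : R ≤ 1)
    (hρ : 0 < ρ) (hργ : ρ < γ) (hl0 : 0 < l) (hl1 : l < 1)
    (α : ℝ → ℝ)
    (hα : α = fun t : ℝ => l * Real.exp (-ρ * t) + (1 - l) * Real.exp (-γ * t))
    (P Ps : ℝ → ℝ → ℝ)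
    (hP : IsERESolution T σ R α P Ps) :
    ∃ K : ℝ, 0 < K ∧
      ∀ t ∈ Set.Ico (0 : ℝ) T, ∀ ε ∈ Set.Ioc (0 : ℝ) (T - t),
        ∀ Pt Pt' : ℝ → ℝ,
          (∀ s ∈ Set.Icc t (t + ε),
            HasDerivWithinAt Pt (Pt' s) (Set.Icc t (t + ε)) s ∧
            Pt' s + σ ^ 2 * Pt s - ((1 - R) / (α (s - t) * R)) * (Pt s) ^ 2 = 0) →
          Pt (t + ε) = P t (t + ε) →
          (∀ s ∈ Set.Icc t (t + ε),
            |Pt s - P t s| ≤ K * ε ∧ |Pt s - P s s| ≤ K * ε) ∧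
          |Pt t - P t t| ≤ K * ε ^ 2 := by
  replace hα : α = quasiHyperbolicDiscount l ρ γ := hα
  subst hα
  have hγ : 0 ≤ γ := (hρ.trans hργ).le
  have hR : 0 ≤ (1 - R) / R := div_nonneg (sub_nonneg.2 hR1) hR0.le
  have hαI : ∀ u ∈ Icc 0 T,
      quasiHyperbolicDiscount l ρ γ T ≤ quasiHyperbolicDiscount l ρ γ u ∧
        quasiHyperbolicDiscount l ρ γ u ≤ 1 := fun u hu =>
    ⟨quasiHyperbolicDiscount.antitone hl0.le hl1.le hρ.le hγ hu.2,
      quasiHyperbolicDiscount.le_one hl0.le hl1.le hρ.le hγ hu.1⟩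
  have hαL : ∀ u ∈ Icc 0 T, ∀ v ∈ Icc 0 T, |quasiHyperbolicDiscount l ρ γ u -
      quasiHyperbolicDiscount l ρ γ v| ≤ γ * |u - v| := fun u hu v hv =>
    quasiHyperbolicDiscount.abs_sub_le hl0.le hl1.le hρ.le hργ.le hu.1 hv.1
  obtain ⟨C, hC, hloc⟩ := hP.exists_local_riccati_estimate hT.le hR
    (quasiHyperbolicDiscount.pos hl0.le hl1.le T) hαI quasiHyperbolicDiscount.map_zero hγ hαL
  obtain ⟨L, hL, hlip⟩ := hP.exists_lipschitz_fst hT.le hR hγ hαL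
  refine ⟨C * T + L + C + 1, by positivity, fun t ht ε hε Pt Pt' hPt hterm => ?_⟩
  have hmain := hloc t ht ε hε Pt Pt' hPt hterm
  obtain ⟨hε0, hεT⟩ := hε
  have hε2 : C * ε ^ 2 ≤ C * T * ε := by
    rw [sq, mul_assoc, mul_comm T]; gcongr; linarith [ht.1]
  refine ⟨fun s hs => ⟨by nlinarith [hmain s hs], ?_⟩, ?_⟩
  · calc |Pt s - P s s| ≤ |Pt s - P t s| + |P t s - P s s| := abs_sub_le _ _ _
      _ ≤ C * ε ^ 2 + L * ε := add_le_add (hmain s hs) <|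
          (hlip t s s ht.1 hs.1 le_rfl (by linarith [hs.2])).trans (by gcongr; linarith [hs.2])
      _ ≤ _ := by nlinarith
  · have : 0 ≤ (C * T + L + 1) * ε ^ 2 := by positivity
    linarith [hmain t (left_mem_Icc.2 (by linarith))]
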